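/- arXiv:1112.5645 — 5 statements merged into one kernel-verified Lean document; each statement's English description precedes it below -/
import Mathlib

section
/- Let N ≥ 1 be an integer. In the quaternion algebra (1,−1/ℚ), the ℤ-submodule O_M(1,N) spanned by the four elements 1, (J+K)/2, N·(−J+K)/2, and (1−I)/2 is closed under multiplication and contains 1, hence is a subring; moreover it is a free ℤ-module of rank 4 whose ℚ-span is all of (1,−1/ℚ) (i.e. it is an order of (1,−1/ℚ)). -/
/-!
Under `(1,-1/ℚ) ≅ M₂(ℚ)` the elements `e₃ = (1-I)/2`, `e₁ = (J+K)/2` and `e₂ = N(-J+K)/2` multiply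
like the matrix units `E₂₂`, `E₁₂` and `N E₂₁`, so the ℤ-span of `1, e₁, e₂, e₃` is the Eichler
order `[[ℤ, ℤ], [Nℤ, ℤ]]`, closed under products. For `N ≠ 0` these four elements form a ℚ-basis
of the algebra, so the lattice is free of rank 4 and spans it.
-/

open Quaternion Submodule

theorem Submodule.mul_mem_span_of_forall_mul_mem {R A : Type*} [CommSemiring R] [Semiring A]
    [Algebra R A] {s : Set A} (hs : ∀ a ∈ s, ∀ b ∈ s, a * b ∈ span R s) {x y : A}
    (hx : x ∈ span R s) (hy : y ∈ span R s) : x * y ∈ span R s := by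
  have hle : span R s * span R s ≤ span R s := by
    rw [span_mul_span, span_le]
    exact Set.mul_subset_iff.mpr hs
  exact hle (mul_mem_mul hx hy)

namespace EichlerOrder

variable (N : ℕ)

def e₁ : ℍ[ℚ, 1, -1] := ⟨0, 0, 1/2, 1/2⟩

def e₂ : ℍ[ℚ, 1, -1] := ⟨0, 0, -(N : ℚ)/2, (N : ℚ)/2⟩

def e₃ : ℍ[ℚ, 1, -1] := ⟨1/2, -(1/2), 0, 0⟩

def gens : Fin 4 → ℍ[ℚ, 1, -1] := ![1, e₁, e₂ N, e₃]

theorem range_gens : Set.range (gens N) = {1, e₁, e₂ N, e₃} := by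
  simp only [gens, Matrix.range_cons, Matrix.range_empty, Set.union_empty, Set.singleton_union]

section MulTable

variable {N}

theorem e₁_mul_e₁ : e₁ * e₁ = 0 := by ext <;> simp [e₁]
theorem e₁_mul_e₂ : e₁ * e₂ N = N • (1 - e₃) := by ext <;> simp [e₁, e₂, e₃] <;> ring
theorem e₁_mul_e₃ : e₁ * e₃ = e₁ := by ext <;> simp [e₁, e₃] <;> ring
theorem e₂_mul_e₁ : e₂ N * e₁ = N • e₃ := by ext <;> simp [e₁, e₂, e₃] <;> ring
theorem e₂_mul_e₂ : e₂ N * e₂ N = 0 := by ext <;> simp [e₂] <;> ring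
theorem e₂_mul_e₃ : e₂ N * e₃ = 0 := by ext <;> simp [e₂, e₃] <;> ring
theorem e₃_mul_e₁ : e₃ * e₁ = 0 := by ext <;> simp [e₁, e₃]
theorem e₃_mul_e₂ : e₃ * e₂ N = e₂ N := by ext <;> simp [e₂, e₃] <;> ring
theorem e₃_mul_e₃ : e₃ * e₃ = e₃ := by ext <;> simp [e₃] <;> ring

end MulTable

theorem mul_mem_span_gens :
    ∀ a ∈ Set.range (gens N), ∀ b ∈ Set.range (gens N), a * b ∈ span ℤ (Set.range (gens N)) := by
  simp only [range_gens, Set.mem_insert_iff, Set.mem_singleton_iff]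
  have one_mem : 1 ∈ span ℤ {1, e₁, e₂ N, e₃} := subset_span (by simp)
  have e₃_mem : e₃ ∈ span ℤ {1, e₁, e₂ N, e₃} := subset_span (by simp)
  rintro a (rfl | rfl | rfl | rfl) b (rfl | rfl | rfl | rfl) <;>
    simp only [one_mul, mul_one, e₁_mul_e₁, e₁_mul_e₂, e₁_mul_e₃, e₂_mul_e₁, e₂_mul_e₂,
      e₂_mul_e₃, e₃_mul_e₁, e₃_mul_e₂, e₃_mul_e₃] <;>
    first
    | exact zero_mem _
    | exact nsmul_mem (sub_mem one_mem e₃_mem) N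
    | exact nsmul_mem e₃_mem N
    | exact subset_span (by simp)

variable {N}

theorem span_rat_gens (hN : N ≠ 0) : span ℚ (Set.range (gens N)) = ⊤ := by
  refine eq_top_iff.2 fun x _ ↦ (mem_span_range_iff_exists_fun ℚ).2
    ⟨![x.re + x.imI, x.imJ + x.imK, (x.imK - x.imJ) / N, -2 * x.imI], ?_⟩
  ext <;> simp [Fin.sum_univ_four, gens, e₁, e₂, e₃] <;> field_simp <;> ring

theorem linearIndependent_rat_gens (hN : N ≠ 0) : LinearIndependent ℚ (gens N) :=
  linearIndependent_of_top_le_span_of_card_eq_finrank (span_rat_gens hN).ge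
    (by simp [QuaternionAlgebra.finrank_eq_four])

end EichlerOrder

open EichlerOrder

/-- For `N ≥ 1`, the `ℤ`-submodule of the quaternion algebra `(1,−1/ℚ)`
spanned by `1`, `(J+K)/2`, `N·(−J+K)/2` and `(1−I)/2` contains `1`, is closed under
multiplication, and is a free `ℤ`-module of rank `4` whose `ℚ`-span is the whole algebra
(i.e. it is an order of `(1,−1/ℚ)`). -/
theorem eichler_order_split_quaternions (N : ℕ) (hN : 1 ≤ N) :
    ∀ M : Submodule ℤ ℍ[ℚ, 1, -1],
      M = Submodule.span ℤ
        ({1, ⟨0, 0, 1/2, 1/2⟩, ⟨0, 0, -(N : ℚ)/2, (N : ℚ)/2⟩, ⟨1/2, -(1/2), 0, 0⟩} :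
          Set ℍ[ℚ, 1, -1]) →
      (1 : ℍ[ℚ, 1, -1]) ∈ M ∧
      (∀ x ∈ M, ∀ y ∈ M, x * y ∈ M) ∧
      Module.Free ℤ M ∧ Module.finrank ℤ M = 4 ∧
      Submodule.span ℚ (M : Set ℍ[ℚ, 1, -1]) = ⊤ := by
  intro M hM
  change M = span ℤ {1, e₁, e₂ N, e₃} at hM
  rw [← range_gens] at hM
  subst hM
  have hN₀ : N ≠ 0 := by omega
  have hℤ := (linearIndependent_rat_gens hN₀).restrict_scalars' ℤ
  refine ⟨subset_span ⟨0, rfl⟩,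
    fun x hx y hy ↦ mul_mem_span_of_forall_mul_mem (mul_mem_span_gens N) hx hy,
    .of_basis (.span hℤ), finrank_span_eq_card hℤ, ?_⟩
  rw [span_span_of_tower, span_rat_gens hN₀]
end

section
/- Let p be a prime with p ≡ 3 (mod 4) and let N be a square-free positive integer dividing (p−1)/2. In the quaternion algebra (p,−1/ℚ), the ℤ-submodule O(2p,N) spanned by the four elements 1, I, N·J, and (1+I+J+K)/2 is closed under multiplication and contains 1, hence is a subring; moreover it is a free ℤ-module of rank 4 whose ℚ-span is all of (p,−1/ℚ) (i.e. it is an order of (p,−1/ℚ)). -/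
/-!
With `ω = (1 + I + J + K) / 2` one has `ω² = ω + (a - 1) / 2` and `I ω = ω + (a - 1) / 2 • (1 + J)`,
so the products of the generators `1, I, N J, ω` are integral combinations of them as soon as
`a = 2 N c + 1`; for `a = p ≡ 3 (mod 4)` this is exactly `N ∣ (p - 1) / 2`. For `N ≠ 0` the
generators span the algebra over `ℚ`, hence form a `ℚ`-basis, and their `ℤ`-span is free of rank 4.
-/

open Quaternion
open scoped Pointwise

theorem Submodule.mul_mem_span_of_mul_subset {R A : Type*} [CommSemiring R] [Semiring A]
    [Algebra R A] {S : Set A} (hS : S * S ⊆ (span R S : Set A)) {x y : A} (hx : x ∈ span R S)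
    (hy : y ∈ span R S) : x * y ∈ span R S := by
  have hxy := mul_mem_mul hx hy
  rw [span_mul_span] at hxy
  exact span_le.2 hS hxy

namespace QuaternionAlgebra

def eichlerGen (a : ℚ) (N : ℤ) : Fin 4 → ℍ[ℚ, a, -1] :=
  ![1, ⟨0, 1, 0, 0⟩, ⟨0, 0, N, 0⟩, ⟨1 / 2, 1 / 2, 1 / 2, 1 / 2⟩]

theorem range_eichlerGen (a : ℚ) (N : ℤ) : Set.range (eichlerGen a N) =
    {1, ⟨0, 1, 0, 0⟩, ⟨0, 0, (N : ℚ), 0⟩, ⟨1 / 2, 1 / 2, 1 / 2, 1 / 2⟩} := by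
  simp only [eichlerGen, Matrix.range_cons, Matrix.range_empty, Set.union_empty,
    Set.singleton_union]

def eichlerMulTable (N c : ℤ) : Fin 4 → Fin 4 → Fin 4 → ℤ :=
  ![![![1, 0, 0, 0], ![0, 1, 0, 0], ![0, 0, 1, 0], ![0, 0, 0, 1]],
    ![![0, 1, 0, 0], ![2 * N * c + 1, 0, 0, 0], ![-N, -N, -1, 2 * N], ![N * c, 0, c, 1]],
    ![![0, 0, 1, 0], ![N, N, 1, -2 * N], ![-(N * N), 0, 0, 0], ![0, N, 1, -N]],
    ![![0, 0, 0, 1], ![N * c + 1, 1, -c, -1], ![-N, -N, 0, N], ![N * c, 0, 0, 1]]]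

variable {a : ℚ} {N c : ℤ}

theorem eichlerGen_mul_eichlerGen (ha : a = 2 * N * c + 1) (i j : Fin 4) :
    eichlerGen a N i * eichlerGen a N j = ∑ k, eichlerMulTable N c i j k • eichlerGen a N k := by
  subst ha
  fin_cases i <;> fin_cases j <;> ext <;>
    simp [eichlerGen, eichlerMulTable, Fin.sum_univ_four] <;> ring

theorem mul_mem_span_eichlerGen (ha : a = 2 * N * c + 1) {x y : ℍ[ℚ, a, -1]}
    (hx : x ∈ Submodule.span ℤ (Set.range (eichlerGen a N)))
    (hy : y ∈ Submodule.span ℤ (Set.range (eichlerGen a N))) :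
    x * y ∈ Submodule.span ℤ (Set.range (eichlerGen a N)) := by
  refine Submodule.mul_mem_span_of_mul_subset (Set.mul_subset_iff.2 ?_) hx hy
  rintro _ ⟨i, rfl⟩ _ ⟨j, rfl⟩
  rw [eichlerGen_mul_eichlerGen ha]
  exact Submodule.mem_span_range_iff_exists_fun ℤ |>.2 ⟨_, rfl⟩

theorem span_rat_eichlerGen (hN : N ≠ 0) :
    Submodule.span ℚ (Set.range (eichlerGen a N)) = ⊤ := by
  refine eq_top_iff.2 fun x _ ↦ (Submodule.mem_span_range_iff_exists_fun ℚ).2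
    ⟨![x.re - x.imK, x.imI - x.imK, (x.imJ - x.imK) / N, 2 * x.imK], ?_⟩
  ext <;> simp [eichlerGen, Fin.sum_univ_four] <;> field_simp <;> ring

theorem linearIndependent_eichlerGen (hN : N ≠ 0) : LinearIndependent ℤ (eichlerGen a N) :=
  .restrict_scalars' ℤ <| linearIndependent_of_top_le_span_of_card_eq_finrank
    (span_rat_eichlerGen hN).ge (by rw [finrank_eq_four, Fintype.card_fin])

end QuaternionAlgebra

open QuaternionAlgebra in
theorem eichler_order_discriminant_two_p_general (p : ℕ) (hp4 : p % 4 = 3)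
    (N : ℕ) (hN : 0 < N) (hdvd : N ∣ (p - 1) / 2) :
    ∀ M : Submodule ℤ ℍ[ℚ, (p : ℚ), -1],
      M = Submodule.span ℤ
        ({1, ⟨0, 1, 0, 0⟩, ⟨0, 0, (N : ℚ), 0⟩, ⟨1/2, 1/2, 1/2, 1/2⟩} :
          Set ℍ[ℚ, (p : ℚ), -1]) →
      (1 : ℍ[ℚ, (p : ℚ), -1]) ∈ M ∧
      (∀ x ∈ M, ∀ y ∈ M, x * y ∈ M) ∧
      Module.Free ℤ M ∧ Module.finrank ℤ M = 4 ∧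
      Submodule.span ℚ (M : Set ℍ[ℚ, (p : ℚ), -1]) = ⊤ := by
  rintro M rfl
  obtain ⟨c, hc⟩ := hdvd
  have hp : (p : ℚ) = 2 * (N : ℤ) * (c : ℤ) + 1 := by
    rw [(by omega : p = 2 * (N * c) + 1)]
    push_cast
    ring
  have hN0 : (N : ℤ) ≠ 0 := by exact_mod_cast hN.ne'
  have hli := linearIndependent_eichlerGen (a := p) hN0
  rw [← Int.cast_natCast (R := ℚ) N, ← range_eichlerGen]
  refine ⟨Submodule.subset_span ⟨0, rfl⟩, fun x hx y hy ↦ mul_mem_span_eichlerGen hp hx hy,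
    .of_basis (.span hli), by rw [finrank_span_eq_card hli, Fintype.card_fin], ?_⟩
  rw [Submodule.span_span_of_tower]
  exact span_rat_eichlerGen hN0

/-- Let `p` be a prime with `p ≡ 3 (mod 4)` and `N` a square-free positive
integer dividing `(p−1)/2`. The `ℤ`-submodule of the quaternion algebra `(p,−1/ℚ)` spanned
by `1`, `I`, `N·J` and `(1+I+J+K)/2` contains `1`, is closed under multiplication, and is a
free `ℤ`-module of rank `4` whose `ℚ`-span is the whole algebra (i.e. it is an order of
`(p,−1/ℚ)`). -/
theorem eichler_order_discriminant_two_p (p : ℕ) (hp : p.Prime) (hp4 : p % 4 = 3)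
    (N : ℕ) (hN : 0 < N) (hsf : Squarefree N) (hdvd : N ∣ (p - 1) / 2) :
    ∀ M : Submodule ℤ ℍ[ℚ, (p : ℚ), -1],
      M = Submodule.span ℤ
        ({1, ⟨0, 1, 0, 0⟩, ⟨0, 0, (N : ℚ), 0⟩, ⟨1/2, 1/2, 1/2, 1/2⟩} :
          Set ℍ[ℚ, (p : ℚ), -1]) →
      (1 : ℍ[ℚ, (p : ℚ), -1]) ∈ M ∧
      (∀ x ∈ M, ∀ y ∈ M, x * y ∈ M) ∧
      Module.Free ℤ M ∧ Module.finrank ℤ M = 4 ∧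
      Submodule.span ℚ (M : Set ℍ[ℚ, (p : ℚ), -1]) = ⊤ :=
  eichler_order_discriminant_two_p_general p hp4 N hN hdvd
end

section
/- Let f : ℂ → ℂ, let A and γ be real 2×2 matrices with positive determinant, let F be a primitive of f on ℍ, and let G be any primitive of the weight-2 slash f|₂A on ℍ. Then for every τ ∈ ℍ: F(τ) − F((Aγ)·τ) = (G(τ) − G(γ·τ)) + (F(τ) − F(A·τ)). (Equivalently, the modular integral satisfies the cocycle relation φ_f^τ(Aγ(τ)) = φ_{f|A}^τ(γ(τ)) + φ_f^τ(A(τ)).) -/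
/-- The Möbius action of a real `2×2` matrix on `ℂ`: `A·z = (az+b)/(cz+d)`. -/
noncomputable def moebius (A : Matrix (Fin 2) (Fin 2) ℝ) (z : ℂ) : ℂ :=
  ((A 0 0 : ℂ) * z + (A 0 1 : ℂ)) / ((A 1 0 : ℂ) * z + (A 1 1 : ℂ))

/-- The weight-2 slash of `f : ℂ → ℂ` by `A`: `(f|₂A)(z) = det(A)·(cz+d)⁻²·f(A·z)`. -/
noncomputable def slashTwo (f : ℂ → ℂ) (A : Matrix (Fin 2) (Fin 2) ℝ) (z : ℂ) : ℂ :=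
  (A.det : ℂ) * ((A 1 0 : ℂ) * z + (A 1 1 : ℂ)) ^ (-2 : ℤ) * f (moebius A z)

/-!
`G` and `F ∘ A` are both primitives of `f|₂A` on `ℍ`: the chain rule turns the derivative
`det A / (cz+d)²` of the Möbius map into exactly the slash factor. Primitives on the connected
open set `ℍ` differ by a constant, so `G τ - G (γ·τ) = F (A·τ) - F (A·(γ·τ))`, and
`A·(γ·τ) = (Aγ)·τ` gives the relation.
-/

theorem IsOpen.sub_eq_sub_of_hasDerivAt {𝕜 E : Type*} [RCLike 𝕜] [NormedAddCommGroup E]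
    [NormedSpace 𝕜 E] {s : Set 𝕜} (hs : IsOpen s) (hs' : IsPreconnected s) {f F G : 𝕜 → E}
    (hF : ∀ z ∈ s, HasDerivAt F (f z) z) (hG : ∀ z ∈ s, HasDerivAt G (f z) z)
    {x y : 𝕜} (hx : x ∈ s) (hy : y ∈ s) : F x - F y = G x - G y := by
  have hFG : ∀ z ∈ s, HasDerivAt (F - G) 0 z := fun z hz => by
    simpa using (hF z hz).sub (hG z hz)
  have hconst : (F - G) x = (F - G) y :=
    hs.is_const_of_deriv_eq_zero hs'
      (fun z hz => (hFG z hz).differentiableAt.differentiableWithinAt)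
      (fun z hz => (hFG z hz).deriv) hx hy
  simp only [Pi.sub_apply] at hconst
  rw [sub_eq_sub_iff_sub_eq_sub, hconst]

theorem denom_ne_zero_of_im_ne_zero {A : Matrix (Fin 2) (Fin 2) ℝ} (hA : A.det ≠ 0) {z : ℂ}
    (hz : z.im ≠ 0) : (A 1 0 : ℂ) * z + (A 1 1 : ℂ) ≠ 0 := by
  intro h
  have h10 : A 1 0 = 0 := by
    simpa [hz] using congrArg Complex.im h
  have h11 : A 1 1 = 0 := by
    simpa [h10] using congrArg Complex.re h
  simp [Matrix.det_fin_two, h10, h11] at hA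

theorem im_moebius (A : Matrix (Fin 2) (Fin 2) ℝ) (z : ℂ) :
    (moebius A z).im = A.det * z.im / Complex.normSq ((A 1 0 : ℂ) * z + (A 1 1 : ℂ)) := by
  simp only [moebius, Complex.div_im, Matrix.det_fin_two, Complex.normSq_apply, Complex.add_re,
    Complex.add_im, Complex.mul_re, Complex.mul_im, Complex.ofReal_re, Complex.ofReal_im,
    zero_mul, add_zero, sub_zero]
  ring

theorem im_moebius_pos {A : Matrix (Fin 2) (Fin 2) ℝ} (hA : 0 < A.det) {z : ℂ}
    (hz : 0 < z.im) : 0 < (moebius A z).im := by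
  rw [im_moebius]
  exact div_pos (mul_pos hA hz)
    (Complex.normSq_pos.2 (denom_ne_zero_of_im_ne_zero hA.ne' hz.ne'))

theorem moebius_mul (A γ : Matrix (Fin 2) (Fin 2) ℝ) {z : ℂ}
    (hz : (γ 1 0 : ℂ) * z + (γ 1 1 : ℂ) ≠ 0) :
    moebius (A * γ) z = moebius A (moebius γ z) := by
  rw [moebius, moebius, moebius, ← mul_div_mul_right _ _ hz]
  simp only [Matrix.mul_apply, Fin.sum_univ_two]
  push_cast
  field_simp
  congr 1 <;> ring

theorem hasDerivAt_moebius (A : Matrix (Fin 2) (Fin 2) ℝ) {z : ℂ}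
    (hz : (A 1 0 : ℂ) * z + (A 1 1 : ℂ) ≠ 0) :
    HasDerivAt (moebius A) ((A.det : ℂ) / ((A 1 0 : ℂ) * z + (A 1 1 : ℂ)) ^ 2) z := by
  have hnum := ((hasDerivAt_id z).const_mul (A 0 0 : ℂ)).add_const (A 0 1 : ℂ)
  have hden := ((hasDerivAt_id z).const_mul (A 1 0 : ℂ)).add_const (A 1 1 : ℂ)
  refine (hnum.div hden hz).congr_deriv ?_
  rw [Matrix.det_fin_two, id]
  push_cast
  ring

theorem HasDerivAt.comp_moebius {f F : ℂ → ℂ} {A : Matrix (Fin 2) (Fin 2) ℝ} {z : ℂ}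
    (hF : HasDerivAt F (f (moebius A z)) (moebius A z))
    (hz : (A 1 0 : ℂ) * z + (A 1 1 : ℂ) ≠ 0) :
    HasDerivAt (F ∘ moebius A) (slashTwo f A z) z := by
  refine (hF.comp z (hasDerivAt_moebius A hz)).congr_deriv ?_
  rw [slashTwo, zpow_neg, zpow_two, div_eq_mul_inv, sq]
  ring

/-- Cocycle relation for modular integrals: if `F` is a primitive of `f` on
`ℍ` and `G` is any primitive of `f|₂A` on `ℍ`, then for `τ ∈ ℍ`,
`F(τ) − F((Aγ)·τ) = (G(τ) − G(γ·τ)) + (F(τ) − F(A·τ))`, i.e.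
`φ_f^τ(Aγ(τ)) = φ_{f|A}^τ(γ(τ)) + φ_f^τ(A(τ))`. -/
theorem modular_integral_cocycle (f : ℂ → ℂ) (A γ : Matrix (Fin 2) (Fin 2) ℝ)
    (hA : 0 < A.det) (hγ : 0 < γ.det) (F G : ℂ → ℂ)
    (hF : ∀ z : ℂ, 0 < z.im → HasDerivAt F (f z) z)
    (hG : ∀ z : ℂ, 0 < z.im → HasDerivAt G (slashTwo f A z) z) :
    ∀ τ : ℂ, 0 < τ.im →
      F τ - F (moebius (A * γ) τ) = (G τ - G (moebius γ τ)) + (F τ - F (moebius A τ)) := by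
  intro τ hτ
  have hℍ : IsOpen {z : ℂ | 0 < z.im} := isOpen_lt continuous_const Complex.continuous_im
  have hFA : ∀ z : ℂ, 0 < z.im → HasDerivAt (F ∘ moebius A) (slashTwo f A z) z := fun z hz =>
    (hF _ (im_moebius_pos hA hz)).comp_moebius (denom_ne_zero_of_im_ne_zero hA.ne' hz.ne')
  have hconst : G τ - G (moebius γ τ) = F (moebius A τ) - F (moebius A (moebius γ τ)) :=
    hℍ.sub_eq_sub_of_hasDerivAt (convex_halfSpace_im_gt 0).isPreconnected hG hFA hτ
      (im_moebius_pos hγ hτ)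
  rw [moebius_mul A γ (denom_ne_zero_of_im_ne_zero hγ.ne' hτ.ne'), hconst]
  ring
end

section
/- Let p be a prime and D > 1 an integer such that −D is not a square modulo p, and let τ = √D·i ∈ ℂ (so τ² = −D and τ lies in the upper half-plane). Let M and M' be 2×2 integer matrices with det M = pⁿ and det M' = pᵐ for some natural numbers n, m ≥ 0. If M and M' send τ to the same point under the Möbius action on the upper half-plane (i.e. M·τ = M'·τ), then there exists a nonzero rational number λ such that M = λ·M' as matrices. -/
/-!
Put `τ = √D·i` and `N = adj(M')·M`. Since `M'·N = det(M')·M`, the matrix `N` fixes `τ`, and as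
`τ² = -D` with `τ` purely imaginary this forces `N = (a, -Dc; c, a)`. Hence
`a² + D c² = det N = p^(n+m)`. Reducing modulo `p`, `-D` not being a square forces `p ∣ a` and
`p ∣ c`, so one can divide by `p²` and descend until the exponent is `0`, where `D > 1` leaves
only `c = 0`. Thus `N = a·1` and `a·M' = pᵐ·M`.
-/

open Complex Matrix

theorem eq_zero_of_sq_add_mul_sq_eq_zero {K : Type*} [Field K] {a c d : K}
    (hd : ¬IsSquare (-d)) (h : a ^ 2 + d * c ^ 2 = 0) : a = 0 ∧ c = 0 := by
  have hc : c = 0 := by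
    by_contra hc
    exact hd ⟨a / c, by field_simp; linear_combination -h⟩
  subst hc
  exact ⟨pow_eq_zero_iff two_ne_zero |>.1 (by simpa using h), rfl⟩

theorem Int.prime_dvd_of_dvd_sq_add_mul_sq {p : ℕ} [Fact p.Prime] {D a c : ℤ}
    (hD : ¬IsSquare ((-D : ℤ) : ZMod p)) (h : (p : ℤ) ∣ a ^ 2 + D * c ^ 2) :
    (p : ℤ) ∣ a ∧ (p : ℤ) ∣ c := by
  simp only [← ZMod.intCast_zmod_eq_zero_iff_dvd] at h ⊢
  push_cast at hD h
  exact eq_zero_of_sq_add_mul_sq_eq_zero hD h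

theorem Int.eq_zero_of_sq_add_mul_sq_eq_prime_pow {p : ℕ} (hp : p.Prime) {D : ℤ} (hD1 : 1 < D)
    (hD : ¬IsSquare ((-D : ℤ) : ZMod p)) {k : ℕ} {a c : ℤ}
    (h : a ^ 2 + D * c ^ 2 = (p : ℤ) ^ k) : c = 0 := by
  have := Fact.mk hp
  have hp0 : (p : ℤ) ≠ 0 := by exact_mod_cast hp.ne_zero
  induction k using Nat.strong_induction_on generalizing a c with
  | _ k ih =>
  rcases k with _ | k
  · by_contra hc
    have : 0 < c ^ 2 := by positivity
    nlinarith [sq_nonneg a]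
  obtain ⟨⟨a', rfl⟩, ⟨c', rfl⟩⟩ :=
    Int.prime_dvd_of_dvd_sq_add_mul_sq hD (h ▸ dvd_pow_self _ k.succ_ne_zero)
  rcases k with _ | j
  · have : (p : ℤ) * (a' ^ 2 + D * c' ^ 2) = 1 :=
      mul_left_cancel₀ hp0 (by linear_combination h)
    exact absurd (Int.eq_one_of_mul_eq_one_right (by positivity) this) (by exact_mod_cast hp.ne_one)
  · have : a' ^ 2 + D * c' ^ 2 = (p : ℤ) ^ j :=
      mul_left_cancel₀ (pow_ne_zero 2 hp0) (by linear_combination h)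
    rw [ih j (by omega) this, mul_zero]

theorem Complex.intCast_add_intCast_mul_ofReal_mul_I_eq_zero {x y : ℤ} {r : ℝ} (hr : r ≠ 0)
    (h : (x : ℂ) + y * (r * I) = 0) : x = 0 ∧ y = 0 := by
  have hre : x = 0 := by simpa using congrArg re h
  have him : y = 0 ∨ r = 0 := by simpa using congrArg im h
  exact ⟨hre, him.resolve_right hr⟩

theorem sqrt_mul_I_sq {D : ℤ} (hD : 0 ≤ D) : ((√D : ℂ) * I) ^ 2 = -D := by
  rw [mul_pow, ← ofReal_pow, Real.sq_sqrt (by positivity)]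
  simp

theorem moebius_den_ne_zero {D : ℤ} (hD : 0 < D) {M : Matrix (Fin 2) (Fin 2) ℤ} (hM : M.det ≠ 0) :
    (M 1 0 : ℂ) * (√D * I) + M 1 1 ≠ 0 := by
  intro h
  obtain ⟨h11, h10⟩ := intCast_add_intCast_mul_ofReal_mul_I_eq_zero
    (Real.sqrt_ne_zero'.2 (by exact_mod_cast hD)) ((add_comm _ _).trans h)
  exact hM (by simp [det_fin_two, h10, h11])

theorem adjugate_mul_fixes_of_cross_eq {R : Type*} [CommRing R]
    (M M' : Matrix (Fin 2) (Fin 2) ℤ) (z : R)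
    (h : (M 0 0 * z + M 0 1) * (M' 1 0 * z + M' 1 1) =
      (M' 0 0 * z + M' 0 1) * (M 1 0 * z + M 1 1)) :
    ((M'.adjugate * M) 1 0 * z + (M'.adjugate * M) 1 1) * z =
      (M'.adjugate * M) 0 0 * z + (M'.adjugate * M) 0 1 := by
  simp only [adjugate_fin_two, mul_apply, Fin.sum_univ_two, of_apply, cons_val', cons_val_zero,
    cons_val_one, empty_val', cons_val_fin_one]
  push_cast
  linear_combination -h

theorem entries_of_fixes_sqrt_mul_I {D : ℤ} (hD : 0 < D) {N : Matrix (Fin 2) (Fin 2) ℤ}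
    (h : (N 1 0 * (√D * I) + N 1 1) * (√D * I) = N 0 0 * (√D * I) + N 0 1) :
    N 1 1 = N 0 0 ∧ N 0 1 = -D * N 1 0 := by
  have h' : ((-D * N 1 0 - N 0 1 : ℤ) : ℂ) + ((N 1 1 - N 0 0 : ℤ) : ℂ) * (√D * I) = 0 := by
    push_cast
    linear_combination h - (N 1 0 : ℂ) * sqrt_mul_I_sq hD.le
  obtain ⟨h1, h2⟩ := intCast_add_intCast_mul_ofReal_mul_I_eq_zero
    (Real.sqrt_ne_zero'.2 (by exact_mod_cast hD)) h'
  omega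

theorem smul_eq_det_smul_of_adjugate_mul_eq_smul_one {ι R : Type*} [Fintype ι] [DecidableEq ι]
    [CommRing R] {M M' : Matrix ι ι R} {a : R} (h : M'.adjugate * M = a • 1) :
    a • M' = M'.det • M :=
  calc a • M' = M' * (M'.adjugate * M) := by rw [h, Matrix.mul_smul, Matrix.mul_one]
    _ = M'.det • M := by rw [← Matrix.mul_assoc, mul_adjugate, Matrix.smul_mul, Matrix.one_mul]

/-- Let `p` be a prime and `D > 1` an integer with `−D` not a square
modulo `p`, and let `τ = √D·i`. If `M, M'` are integer `2×2` matrices with `det M = pⁿ`,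
`det M' = pᵐ` sending `τ` to the same point under the Möbius action on the upper half-plane,
then `M = λ·M'` for some nonzero rational `λ`. -/
theorem moebius_eq_implies_proportional (p : ℕ) (hp : p.Prime) (D : ℤ) (hD1 : 1 < D)
    (hD : ¬ IsSquare ((-D : ℤ) : ZMod p))
    (M M' : Matrix (Fin 2) (Fin 2) ℤ) (n m : ℕ)
    (hdM : M.det = (p : ℤ) ^ n) (hdM' : M'.det = (p : ℤ) ^ m)
    (heq :
      ((M 0 0 : ℂ) * (Real.sqrt (D : ℝ) * Complex.I) + (M 0 1 : ℂ)) /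
          ((M 1 0 : ℂ) * (Real.sqrt (D : ℝ) * Complex.I) + (M 1 1 : ℂ)) =
        ((M' 0 0 : ℂ) * (Real.sqrt (D : ℝ) * Complex.I) + (M' 0 1 : ℂ)) /
          ((M' 1 0 : ℂ) * (Real.sqrt (D : ℝ) * Complex.I) + (M' 1 1 : ℂ))) :
    ∃ l : ℚ, l ≠ 0 ∧ ∀ i j : Fin 2, (M i j : ℚ) = l * (M' i j : ℚ) := by
  have hD0 : 0 < D := by omega
  have hp0 : (p : ℤ) ≠ 0 := by exact_mod_cast hp.ne_zero
  have hpq : (p : ℚ) ^ m ≠ 0 := pow_ne_zero _ (by exact_mod_cast hp.ne_zero)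
  rw [div_eq_div_iff (moebius_den_ne_zero hD0 (hdM ▸ pow_ne_zero n hp0))
    (moebius_den_ne_zero hD0 (hdM' ▸ pow_ne_zero m hp0))] at heq
  have hfix := adjugate_mul_fixes_of_cross_eq M M' _ heq
  generalize hN : M'.adjugate * M = N at hfix
  obtain ⟨hN11, hN01⟩ := entries_of_fixes_sqrt_mul_I hD0 hfix
  have hdetN : N 0 0 ^ 2 + D * N 1 0 ^ 2 = (p : ℤ) ^ (m + n) := by
    have h := det_mul M'.adjugate M
    rw [det_adjugate, Fintype.card_fin, pow_one, hN, det_fin_two, hN11, hN01, hdM, hdM'] at h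
    rw [pow_add]
    linear_combination h
  have hN10 : N 1 0 = 0 := Int.eq_zero_of_sq_add_mul_sq_eq_prime_pow hp hD1 hD hdetN
  have ha : N 0 0 ≠ 0 := by
    rintro h0
    simp only [h0, hN10] at hdetN
    exact pow_ne_zero (m + n) hp0 (by linear_combination -hdetN)
  have hscalar : N 0 0 • M' = (p : ℤ) ^ m • M := hdM' ▸
    smul_eq_det_smul_of_adjugate_mul_eq_smul_one (hN.trans (by
      ext i j; fin_cases i <;> fin_cases j <;> simp [hN11, hN01, hN10]))
  refine ⟨N 0 0 / (p : ℚ) ^ m, div_ne_zero (by exact_mod_cast ha) hpq, fun i j => ?_⟩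
  have h := congrFun (congrFun hscalar i) j
  simp only [Matrix.smul_apply, smul_eq_mul] at h
  rw [div_mul_eq_mul_div, eq_div_iff hpq, mul_comm]
  exact_mod_cast h.symm
end

section
/- Let p be a prime and D > 1 an integer such that −D is not a square modulo p, and let τ = √D·i ∈ ℂ. Then there is no 2×2 integer matrix η = (a b; c d), with not all of a, b, c, d divisible by p and with det η = p^k for some integer k ≥ 1, satisfying a·τ + b = τ·(c·τ + d) (i.e. fixing τ under the Möbius action). -/
/-- Let `p` be a prime and `D > 1` an integer with `−D` not a square
modulo `p`, and let `τ = √D·i`. Then there is no integer `2×2` matrix `η = (a b; c d)`,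
with not all entries divisible by `p` and `det η = p^k` for some `k ≥ 1`, fixing `τ` under
the Möbius action (i.e. with `a·τ + b = τ·(c·τ + d)`). -/
theorem no_integral_matrix_fixes_tau (p : ℕ) (hp : p.Prime) (D : ℤ) (hD1 : 1 < D)
    (hD : ¬ IsSquare ((-D : ℤ) : ZMod p)) :
    ¬ ∃ (η : Matrix (Fin 2) (Fin 2) ℤ) (k : ℕ), 1 ≤ k ∧ η.det = (p : ℤ) ^ k ∧
        ¬ (∀ i j : Fin 2, (p : ℤ) ∣ η i j) ∧
        (η 0 0 : ℂ) * (Real.sqrt (D : ℝ) * Complex.I) + (η 0 1 : ℂ) =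
          (Real.sqrt (D : ℝ) * Complex.I) *
            ((η 1 0 : ℂ) * (Real.sqrt (D : ℝ) * Complex.I) + (η 1 1 : ℂ)) := by
  haveI : Fact p.Prime := ⟨hp⟩
  rintro ⟨η, k, hk, hdet, hndvd, heq⟩
  rw [Complex.ext_iff] at heq
  simp only [Complex.add_re, Complex.add_im, Complex.mul_re, Complex.mul_im,
    Complex.I_re, Complex.I_im, Complex.ofReal_re, Complex.ofReal_im,
    Complex.intCast_re, Complex.intCast_im] at heq
  obtain ⟨h1, h2⟩ := heq
  ring_nf at h1 h2
  have hD0 : (0:ℝ) ≤ (D:ℝ) := by exact_mod_cast le_of_lt (lt_trans zero_lt_one hD1)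
  have hs2 : Real.sqrt (D:ℝ) ^ 2 = (D : ℝ) := Real.sq_sqrt hD0
  have hs0 : Real.sqrt (D:ℝ) ≠ 0 := by
    have h : (0:ℝ) < (D:ℝ) := by exact_mod_cast lt_trans zero_lt_one hD1
    positivity
  rw [hs2] at h1
  -- b = -(D * c)
  have hbc : η 0 1 = -((D:ℤ) * η 1 0) := by exact_mod_cast h1
  -- a = d
  have had : η 0 0 = η 1 1 := by
    have h2' : (η 0 0 : ℝ) * Real.sqrt (D:ℝ) = (η 1 1 : ℝ) * Real.sqrt (D:ℝ) := by
      linarith [h2]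
    exact_mod_cast mul_right_cancel₀ hs0 h2'
  rw [Matrix.det_fin_two] at hdet
  have hzdet : η 0 0 * η 0 0 + η 1 0 * η 1 0 * D = (p:ℤ) ^ k := by
    rw [← hdet, hbc]; nth_rewrite 1 [had]; ring
  have hz : (η 0 0 : ZMod p) * (η 0 0 : ZMod p)
      + (η 1 0 : ZMod p) * (η 1 0 : ZMod p) * (D : ZMod p) = 0 := by
    have h := congrArg (fun x : ℤ => (x : ZMod p)) hzdet
    push_cast at h
    rw [h, ZMod.natCast_self, zero_pow (by omega : k ≠ 0)]
  by_cases hc : ((η 1 0 : ℤ) : ZMod p) = 0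
  · have ha0 : ((η 0 0 : ℤ) : ZMod p) = 0 := by
      have h : ((η 0 0 : ℤ) : ZMod p) * ((η 0 0 : ℤ) : ZMod p) = 0 := by
        rw [hc] at hz; simpa using hz
      exact mul_self_eq_zero.mp h
    have dvd_a : (p:ℤ) ∣ η 0 0 := (ZMod.intCast_zmod_eq_zero_iff_dvd _ p).mp ha0
    have dvd_c : (p:ℤ) ∣ η 1 0 := (ZMod.intCast_zmod_eq_zero_iff_dvd _ p).mp hc
    apply hndvd
    intro i j
    fin_cases i <;> fin_cases j
    · exact dvd_a
    · show (p:ℤ) ∣ η 0 1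
      rw [hbc]; exact (dvd_c.mul_left D).neg_right
    · exact dvd_c
    · show (p:ℤ) ∣ η 1 1
      rw [← had]; exact dvd_a
  · apply hD
    refine ⟨((η 0 0 : ℤ) : ZMod p) * ((η 1 0 : ℤ) : ZMod p)⁻¹, ?_⟩
    push_cast
    field_simp
    linear_combination -hz
end
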